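/- Let G be a snark and e an edge of G, and let d₁ and d₂ be the two new edges of the simple cubic graph G_e. If G_e admits an edge-3-coloring, then d₁ and d₂ are orthogonal edges of G_e. -/

import Mathlib

namespace SnarkPaper

open SimpleGraph

/-- The color group `Z₂ × Z₂`. -/
abbrev Color : Type := ZMod 2 × ZMod 2

/-- The color `a = (0,1)`. -/
def colA : Color := (0, 1)
/-- The color `b = (1,0)`. -/
def colB : Color := (1, 0)
/-- The color `c = (1,1)`. -/
def colC : Color := (1, 1)

/-- The set of the three nonzero elements of `Z₂ × Z₂` used as colors. -/
def colorSet : Set Color := {colA, colB, colC}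

variable {V V₁ V₂ : Type*}

/-- Two edges are adjacent if they are distinct and share an endpoint. -/
def EdgesAdj (e f : Sym2 V) : Prop := e ≠ f ∧ ∃ x, x ∈ e ∧ x ∈ f

/-- The set of edge-3-colorings of `G`: functions assigning to each edge of `G` one of the
three nonzero elements of `Z₂ × Z₂` so that adjacent edges get distinct values (and pinned
to `0` off the edge set, so that counting colorings is faithful). -/
def EC (G : SimpleGraph V) : Set (Sym2 V → Color) :=
  {γ | (∀ e ∈ G.edgeSet, γ e ∈ colorSet) ∧ (∀ e ∉ G.edgeSet, γ e = 0) ∧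
       ∀ e ∈ G.edgeSet, ∀ f ∈ G.edgeSet, EdgesAdj e f → γ e ≠ γ f}

/-- The set of 3-edge-decompositions of `G`: partitions of the edge set of `G` into three
classes such that no two adjacent edges lie in the same class. -/
def ED (G : SimpleGraph V) : Set (Set (Set (Sym2 V))) :=
  {D | D.ncard = 3 ∧ (∀ s ∈ D, s ⊆ G.edgeSet) ∧
       (∀ e ∈ G.edgeSet, ∃! s, s ∈ D ∧ e ∈ s) ∧
       (∀ s ∈ D, ∀ e ∈ s, ∀ f ∈ s, ¬ EdgesAdj e f)}

/-- Two edges lie in the same class of the decomposition `D`. -/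
def SameClass (D : Set (Set (Sym2 V))) (e f : Sym2 V) : Prop :=
  ∃ s ∈ D, e ∈ s ∧ f ∈ s

/-- A graph is cubic if every vertex has degree 3. -/
def IsCubic (G : SimpleGraph V) : Prop := ∀ v, (G.neighborSet v).ncard = 3

/-- A graph is quasi-cubic if every vertex has degree 1 or 3. -/
def IsQuasiCubic (G : SimpleGraph V) : Prop :=
  ∀ v, (G.neighborSet v).ncard = 1 ∨ (G.neighborSet v).ncard = 3

/-- `G` is cyclically `n`-edge-connected: for any two vertex-disjoint cycles `C₁`, `C₂` and
any set `S` of at most `n-1` edges of `G` containing no edge of `C₁` or `C₂`, deleting `S`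
leaves a path from a vertex of `C₁` to a vertex of `C₂`. -/
def CyclicallyEdgeConnected (G : SimpleGraph V) (n : ℕ) : Prop :=
  ∀ ⦃x y : V⦄ (C₁ : G.Walk x x) (C₂ : G.Walk y y), C₁.IsCycle → C₂.IsCycle →
    (∀ w, w ∈ C₁.support → w ∉ C₂.support) →
    ∀ S : Set (Sym2 V), S ⊆ G.edgeSet → S.ncard ≤ n - 1 →
      (∀ e ∈ S, e ∉ C₁.edges ∧ e ∉ C₂.edges) →
      ∃ x' ∈ C₁.support, ∃ y' ∈ C₂.support, (G.deleteEdges S).Reachable x' y'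

/-- A snark: a connected cubic graph with girth at least 5 which is cyclically
4-edge-connected and admits no edge-3-coloring. -/
def IsSnark (G : SimpleGraph V) : Prop :=
  G.Connected ∧ IsCubic G ∧ 5 ≤ G.girth ∧ CyclicallyEdgeConnected G 4 ∧ EC G = ∅

/-- The edges `d₁` and `d₂` lie in a common (two-colored) Kempe cycle for the coloring `γ`. -/
def InCommonKempeCycle (G : SimpleGraph V) (γ : Sym2 V → Color) (d₁ d₂ : Sym2 V) : Prop :=
  ∃ x ∈ colorSet, ∃ y ∈ colorSet, x ≠ y ∧
    ∃ (a : V) (C : G.Walk a a), C.IsCycle ∧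
      (∀ e ∈ C.edges, γ e = x ∨ γ e = y) ∧ d₁ ∈ C.edges ∧ d₂ ∈ C.edges

/-- Two edges of `G` are orthogonal if no edge-3-coloring of `G` puts them in a common
Kempe cycle. -/
def OrthogonalEdges (G : SimpleGraph V) (d₁ d₂ : Sym2 V) : Prop :=
  d₁ ∈ G.edgeSet ∧ d₂ ∈ G.edgeSet ∧ ∀ γ ∈ EC G, ¬ InCommonKempeCycle G γ d₁ d₂

/-- The graph `G_e` for the edge `e = s(u,v)`: delete `u`, `v` and the five edges incident
to them (leaving `u` and `v` as isolated vertices), and add the new edge `d₁` joining the two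
other neighbors of `u` and the new edge `d₂` joining the two other neighbors of `v`. -/
def edgeDeleted (G : SimpleGraph V) (u v : V) : SimpleGraph V :=
  SimpleGraph.fromEdgeSet
    ({e ∈ G.edgeSet | u ∉ e ∧ v ∉ e} ∪
     {e | ∃ x y, e = s(x, y) ∧ x ≠ y ∧ G.Adj u x ∧ G.Adj u y ∧ x ≠ v ∧ y ≠ v} ∪
     {e | ∃ x y, e = s(x, y) ∧ x ≠ y ∧ G.Adj v x ∧ G.Adj v y ∧ x ≠ u ∧ y ≠ u})


/-!
Suppose an edge-3-coloring `γ` of `G_e` has an `xy`-Kempe cycle through both new edges. Traversed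
suitably it reads `ta, tb, A₁, wa, wb, A₂, ta` with `d₁ = ta tb`, `d₂ = wa wb`, and vertex-disjoint
arcs `A₁`, `A₂`. Interchange `x` and `y` on `A₂`; in `Z₂ × Z₂` this adds `z = x + y` to the colors
of `A₂`. As `A₂` is a whole Kempe chain of `G_e - d₁ - d₂`, the result is a proper coloring of
`G - u - v` in which `γ d₁ + z` is missing at `ta`, `γ d₁` at `tb`, `γ d₂` at `wa` and `γ d₂ + z`
at `wb`. Coloring `uv` with `z` and each other edge at `u` or `v` with the color missing at its far
end then edge-3-colors the snark `G`, which is absurd.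
-/

section Colors

lemma mem_colorSet_iff {c : Color} : c ∈ colorSet ↔ c ≠ 0 := by
  revert c
  simp only [colorSet, colA, colB, colC, Set.mem_insert_iff, Set.mem_singleton_iff]
  decide

lemma third_color {a b : Color} (ha : a ∈ colorSet) (hb : b ∈ colorSet) (hab : a ≠ b) :
    a + b ∈ colorSet ∧ a + b ≠ a ∧ a + b ≠ b := by
  rw [mem_colorSet_iff] at ha hb ⊢
  revert a b
  decide

lemma add_add_eq_or {x y c : Color} (hc : c = x ∨ c = y) :
    c + (x + y) = x ∨ c + (x + y) = y := by
  revert x y c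
  decide

lemma eq_add_add_of_ne {x y c c' : Color} (hc : c = x ∨ c = y) (hc' : c' = x ∨ c' = y)
    (hne : c' ≠ c) : c' = c + (x + y) := by
  have hx : ∀ a b : Color, b = a + (a + b) := by decide
  have hy : ∀ a b : Color, a = b + (a + b) := by decide
  rcases hc with rfl | rfl <;> rcases hc' with rfl | rfl
  exacts [absurd rfl hne, hx _ _, hy _ _, absurd rfl hne]

end Colors

section PartialColorings

lemma EdgesAdj.symm {e f : Sym2 V} (h : EdgesAdj e f) : EdgesAdj f e :=
  ⟨h.1.symm, h.2.imp fun _ hx => ⟨hx.2, hx.1⟩⟩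

def IsProperOn (γ : Sym2 V → Color) (E : Set (Sym2 V)) : Prop :=
  ∀ e ∈ E, ∀ f ∈ E, EdgesAdj e f → γ e ≠ γ f

def IsMissingAt (γ : Sym2 V → Color) (E : Set (Sym2 V)) (p : V) (c : Color) : Prop :=
  ∀ e ∈ E, p ∈ e → γ e ≠ c

lemma IsProperOn.mono {γ : Sym2 V → Color} {E E' : Set (Sym2 V)} (h : IsProperOn γ E)
    (hE : E' ⊆ E) : IsProperOn γ E' :=
  fun e he f hf hef => h e (hE he) f (hE hf) hef

open Classical in
/-- Interchanging `x` and `y` on the `xy`-colored edges `K`: in `Z₂ × Z₂` this adds `x + y`. -/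
noncomputable def kempeSwap (γ : Sym2 V → Color) (K : Set (Sym2 V)) (x y : Color) :
    Sym2 V → Color :=
  fun e => if e ∈ K then γ e + (x + y) else γ e

variable {γ : Sym2 V → Color} {E K : Set (Sym2 V)} {x y : Color}

lemma kempeSwap_of_mem {e : Sym2 V} (he : e ∈ K) : kempeSwap γ K x y e = γ e + (x + y) :=
  if_pos he

lemma kempeSwap_of_notMem {e : Sym2 V} (he : e ∉ K) : kempeSwap γ K x y e = γ e :=
  if_neg he

lemma kempeSwap_mem_colorSet (hγ : ∀ e ∈ E, γ e ∈ colorSet) (hx : x ∈ colorSet)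
    (hy : y ∈ colorSet) (hK : ∀ e ∈ K, γ e = x ∨ γ e = y) {e : Sym2 V} (he : e ∈ E) :
    kempeSwap γ K x y e ∈ colorSet := by
  by_cases heK : e ∈ K
  · rw [kempeSwap_of_mem heK]
    rcases add_add_eq_or (hK e heK) with h | h <;> rw [h]
    exacts [hx, hy]
  · rw [kempeSwap_of_notMem heK]
    exact hγ e he

lemma IsProperOn.kempeSwap (hγ : IsProperOn γ E) (hK : ∀ e ∈ K, γ e = x ∨ γ e = y)
    (hclosed : ∀ e ∈ K, ∀ f ∈ E, EdgesAdj e f → (γ f = x ∨ γ f = y) → f ∈ K) :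
    IsProperOn (kempeSwap γ K x y) E := by
  have hmixed : ∀ e ∈ K, ∀ f ∈ E, f ∉ K → EdgesAdj e f → γ e + (x + y) ≠ γ f :=
    fun e he f hf hfK hef heq => hfK (hclosed e he f hf hef (heq ▸ add_add_eq_or (hK e he)))
  intro e he f hf hef
  by_cases heK : e ∈ K <;> by_cases hfK : f ∈ K <;>
    simp only [kempeSwap_of_mem, kempeSwap_of_notMem, heK, hfK, not_false_eq_true]
  · exact fun h => hγ e he f hf hef (add_right_cancel h)
  · exact hmixed e heK f hf hfK hef
  · exact (hmixed f hfK e he heK hef.symm).symm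
  · exact hγ e he f hf hef

lemma EC_nonempty_of_injOn {G : SimpleGraph V} (c : Sym2 V → Color)
    (hmem : ∀ e ∈ G.edgeSet, c e ∈ colorSet)
    (hinj : ∀ p, Set.InjOn (fun q => c s(p, q)) (G.neighborSet p)) : (EC G).Nonempty := by
  classical
  refine ⟨fun e => if e ∈ G.edgeSet then c e else 0, fun e he => ?_, fun e he => if_neg he, ?_⟩
  · simpa [he] using hmem e he
  · rintro e he f hf ⟨hef, p, hpe, hpf⟩
    obtain ⟨q, rfl⟩ := Sym2.mem_iff_exists.mp hpe
    obtain ⟨r, rfl⟩ := Sym2.mem_iff_exists.mp hpf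
    simpa [he, hf] using (hinj p).ne he hf (by rintro rfl; exact hef rfl)

lemma injOn_triple {β : Type*} {f : V → β} {a b c : V} (hab : f a ≠ f b) (hac : f a ≠ f c)
    (hbc : f b ≠ f c) : Set.InjOn f {a, b, c} := by
  rintro q (rfl | rfl | rfl) r (rfl | rfl | rfl) hqr <;>
    first | rfl | exact absurd hqr ‹_› | exact absurd hqr.symm ‹_›

end PartialColorings

section Cycles

variable {H : SimpleGraph V}

lemma exists_mem_edges_ne_of_isCycle {r : V} {C : H.Walk r r} (hC : C.IsCycle) {e : Sym2 V}
    (he : e ∈ C.edges) {p : V} (hp : p ∈ e) : ∃ g ∈ C.edges, p ∈ g ∧ g ≠ e := by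
  obtain ⟨q, rfl⟩ := Sym2.mem_iff_exists.mp hp
  have htwo := hC.ncard_neighborSet_toSubgraph_eq_two (C.fst_mem_support_of_mem_edges he)
  obtain ⟨q', hq', hne⟩ := Set.exists_ne_of_one_lt_ncard (by rw [htwo]; norm_num) q
  have hpq : p ≠ q := (C.edges_subset_edgeSet he : H.Adj p q).ne
  exact ⟨s(p, q'), Walk.adj_toSubgraph_iff_mem_edges.mp hq', Sym2.mem_mk_left _ _,
    by simp [hne, hpq]⟩

lemma mem_edges_of_color_eq_add {γ : Sym2 V → Color} (hγ : IsProperOn γ H.edgeSet)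
    {x y : Color} {r : V} {C : H.Walk r r} (hC : C.IsCycle)
    (hcol : ∀ e ∈ C.edges, γ e = x ∨ γ e = y) {e f : Sym2 V} {p : V} (he : e ∈ C.edges)
    (hpe : p ∈ e) (hf : f ∈ H.edgeSet) (hpf : p ∈ f) (hfe : γ f = γ e + (x + y)) :
    f ∈ C.edges := by
  obtain ⟨g, hg, hpg, hge⟩ := exists_mem_edges_ne_of_isCycle hC he hpe
  have hgH := C.edges_subset_edgeSet hg
  have hgγ : γ g = γ e + (x + y) := eq_add_add_of_ne (hcol e he) (hcol g hg)
    (hγ g hgH e (C.edges_subset_edgeSet he) ⟨hge, p, hpg, hpe⟩)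
  by_contra hfC
  exact hγ f hf g hgH ⟨fun h => hfC (h ▸ hg), p, hpf, hpg⟩ (hfe.trans hgγ.symm)

lemma exists_isCycle_cons_of_mem_edges {r a b : V} {C : H.Walk r r} (hC : C.IsCycle)
    (hab : s(a, b) ∈ C.edges) :
    ∃ (h : H.Adj a b) (P : H.Walk b a), (Walk.cons h P).IsCycle ∧
      ∀ e, e ∈ (Walk.cons h P).edges ↔ e ∈ C.edges := by
  classical
  have ha : a ∈ C.support := C.fst_mem_support_of_mem_edges hab
  obtain ⟨D, hD, hDb, hDC⟩ : ∃ D : H.Walk a a, D.IsCycle ∧ D.snd = b ∧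
      ∀ e, e ∈ D.edges ↔ e ∈ C.edges := by
    have hrot : ∀ e, e ∈ (C.rotate a ha).edges ↔ e ∈ C.edges := fun e =>
      (C.rotate_edges a ha).mem_iff
    have hb : b ∈ (C.rotate a ha).toSubgraph.neighborSet a :=
      Walk.adj_toSubgraph_iff_mem_edges.mpr ((hrot _).mpr hab)
    rw [(hC.rotate ha).neighborSet_toSubgraph_endpoint] at hb
    rcases hb with hb | hb
    · exact ⟨_, hC.rotate ha, hb.symm, hrot⟩
    · exact ⟨_, (hC.rotate ha).reverse, by rw [Walk.snd_reverse, hb],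
        by simpa [Walk.edges_reverse] using hrot⟩
  cases D with
  | nil => exact absurd rfl hD.ne_nil
  | cons h P =>
    rw [Walk.snd_cons] at hDb
    subst hDb
    exact ⟨h, P, hD, hDC⟩

lemma exists_append_cons_of_mem_edges {s t : V} (P : H.Walk s t) {e : Sym2 V}
    (he : e ∈ P.edges) :
    ∃ (a b : V) (h : H.Adj a b) (P₁ : H.Walk s a) (P₂ : H.Walk b t),
      P = P₁.append (Walk.cons h P₂) ∧ s(a, b) = e := by
  induction P with
  | nil => simp at he
  | cons h R ih =>
    rcases List.mem_cons.mp (Walk.edges_cons h R ▸ he) with rfl | he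
    · exact ⟨_, _, h, Walk.nil, R, rfl, rfl⟩
    · obtain ⟨a, b, h', P₁, P₂, rfl, rfl⟩ := ih he
      exact ⟨a, b, h', Walk.cons h P₁, P₂, rfl, rfl⟩

variable {a b c d : V}

def arcCycle (h₁ : H.Adj a b) (A₁ : H.Walk b c) (h₂ : H.Adj c d) (A₂ : H.Walk d a) :
    H.Walk a a :=
  Walk.cons h₁ (A₁.append (Walk.cons h₂ A₂))

variable {h₁ : H.Adj a b} {A₁ : H.Walk b c} {h₂ : H.Adj c d} {A₂ : H.Walk d a}

lemma mem_edges_arcCycle {e : Sym2 V} :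
    e ∈ (arcCycle h₁ A₁ h₂ A₂).edges ↔ e = s(a, b) ∨ e ∈ A₁.edges ∨ e = s(c, d) ∨ e ∈ A₂.edges :=
  by simp [arcCycle]

lemma disjoint_support_arcs (hC : (arcCycle h₁ A₁ h₂ A₂).IsCycle) :
    A₁.support.Disjoint A₂.support := by
  simpa [Walk.support_tail_of_not_nil] using
    ((Walk.cons_isCycle_iff _ _).mp hC).1.disjoint_support_of_append Walk.not_nil_cons

lemma mem_edges_arc_of_mem_support (hC : (arcCycle h₁ A₁ h₂ A₂).IsCycle) {g : Sym2 V}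
    (hg : g ∈ (arcCycle h₁ A₁ h₂ A₂).edges) (hg₁ : g ≠ s(a, b)) (hg₂ : g ≠ s(c, d)) {p : V}
    (hpg : p ∈ g) (hp : p ∈ A₂.support) : g ∈ A₂.edges := by
  rcases mem_edges_arcCycle.mp hg with hg | hg | hg | hg
  · exact absurd hg hg₁
  · exact absurd hp (disjoint_support_arcs hC (A₁.mem_support_of_mem_edges hg hpg))
  · exact absurd hg hg₂
  · exact hg

end Cycles

section KempeArcs

variable {H : SimpleGraph V} {γ : Sym2 V → Color} {x y : Color} {E : Set (Sym2 V)}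

lemma isMissingAt_kempeSwap_of_notMem_support {s t : V} {A : H.Walk s t}
    (hγ : IsProperOn γ H.edgeSet) (hE : E ⊆ H.edgeSet) {e : Sym2 V} (he : e ∈ H.edgeSet)
    (heE : e ∉ E) {p : V} (hpe : p ∈ e) (hp : p ∉ A.support) :
    IsMissingAt (kempeSwap γ A.edgeSet x y) E p (γ e) := by
  intro f hf hpf
  rw [kempeSwap_of_notMem fun hfA => hp (A.mem_support_of_mem_edges hfA hpf)]
  exact hγ f (hE hf) e he ⟨fun h => heE (h ▸ hf), p, hpf, hpe⟩

variable {a b c d : V} {h₁ : H.Adj a b} {A₁ : H.Walk b c} {h₂ : H.Adj c d} {A₂ : H.Walk d a}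

lemma mem_edges_arc_of_color_eq_add (hγ : IsProperOn γ H.edgeSet)
    (hC : (arcCycle h₁ A₁ h₂ A₂).IsCycle)
    (hcol : ∀ e ∈ (arcCycle h₁ A₁ h₂ A₂).edges, γ e = x ∨ γ e = y) (hE : E ⊆ H.edgeSet)
    (hd₁ : s(a, b) ∉ E) (hd₂ : s(c, d) ∉ E) {e f : Sym2 V} {p : V}
    (he : e ∈ (arcCycle h₁ A₁ h₂ A₂).edges) (hpe : p ∈ e) (hf : f ∈ E) (hpf : p ∈ f)
    (hp : p ∈ A₂.support) (hfe : γ f = γ e + (x + y)) : f ∈ A₂.edges :=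
  mem_edges_arc_of_mem_support hC (mem_edges_of_color_eq_add hγ hC hcol he hpe (hE hf) hpf hfe)
    (fun h => hd₁ (h ▸ hf)) (fun h => hd₂ (h ▸ hf)) hpf hp

lemma isMissingAt_kempeSwap_of_mem_support (hγ : IsProperOn γ H.edgeSet)
    (hC : (arcCycle h₁ A₁ h₂ A₂).IsCycle)
    (hcol : ∀ e ∈ (arcCycle h₁ A₁ h₂ A₂).edges, γ e = x ∨ γ e = y) (hE : E ⊆ H.edgeSet)
    (hd₁ : s(a, b) ∉ E) (hd₂ : s(c, d) ∉ E) {e : Sym2 V}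
    (he : e ∈ (arcCycle h₁ A₁ h₂ A₂).edges) (heE : e ∉ E) {p : V} (hpe : p ∈ e)
    (hp : p ∈ A₂.support) : IsMissingAt (kempeSwap γ A₂.edgeSet x y) E p (γ e + (x + y)) := by
  intro f hf hpf
  by_cases hfA : f ∈ A₂.edgeSet
  · rw [kempeSwap_of_mem hfA]
    exact fun h => hγ f (hE hf) e ((arcCycle h₁ A₁ h₂ A₂).edges_subset_edgeSet he)
      ⟨fun h => heE (h ▸ hf), p, hpf, hpe⟩ (add_right_cancel h)
  · rw [kempeSwap_of_notMem hfA]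
    exact fun h => hfA (mem_edges_arc_of_color_eq_add hγ hC hcol hE hd₁ hd₂ he hpe hf hpf hp h)

lemma isProperOn_kempeSwap_arc (hγ : IsProperOn γ H.edgeSet)
    (hC : (arcCycle h₁ A₁ h₂ A₂).IsCycle)
    (hcol : ∀ e ∈ (arcCycle h₁ A₁ h₂ A₂).edges, γ e = x ∨ γ e = y) (hE : E ⊆ H.edgeSet)
    (hd₁ : s(a, b) ∉ E) (hd₂ : s(c, d) ∉ E) :
    IsProperOn (kempeSwap γ A₂.edgeSet x y) E := by
  have hA₂ : ∀ e ∈ A₂.edgeSet, e ∈ (arcCycle h₁ A₁ h₂ A₂).edges := fun e he =>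
    mem_edges_arcCycle.mpr (Or.inr (Or.inr (Or.inr he)))
  refine (hγ.mono hE).kempeSwap (fun e he => hcol e (hA₂ e he)) ?_
  rintro e he f hf ⟨hef, p, hpe, hpf⟩ hfxy
  have hfe : γ f ≠ γ e :=
    hγ f (hE hf) e (Walk.edges_subset_edgeSet _ (hA₂ e he)) ⟨hef.symm, p, hpf, hpe⟩
  exact mem_edges_arc_of_color_eq_add hγ hC hcol hE hd₁ hd₂ (hA₂ e he) hpe hf hpf
    (A₂.mem_support_of_mem_edges he hpe) (eq_add_add_of_ne (hcol e (hA₂ e he)) hfxy hfe)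

end KempeArcs

section Graphs

variable {G : SimpleGraph V}

lemma cliqueFree_three_of_four_le_girth (h : 4 ≤ G.girth) : G.CliqueFree 3 := by
  intro s hs
  obtain ⟨a, w, hw, hlen⟩ := is3Clique_iff_exists_cycle_length_three.mp ⟨s, hs⟩
  have := girth_le_length hw
  omega

lemma not_adj_of_cliqueFree_three (h : G.CliqueFree 3) {a b c : V} (hab : G.Adj a b)
    (hbc : G.Adj b c) : ¬ G.Adj a c := by
  classical
  exact fun hac => h {a, b, c} (is3Clique_triple_iff.mpr ⟨hab, hac, hbc⟩)

lemma neighborSet_eq_of_isCubic (hG : IsCubic G) {u a b c : V} (ha : G.Adj u a)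
    (hb : G.Adj u b) (hc : G.Adj u c) (hab : a ≠ b) (hac : a ≠ c) (hbc : b ≠ c) :
    G.neighborSet u = {a, b, c} := by
  refine (Set.eq_of_subset_of_ncard_le ?_ ?_ (Set.finite_of_ncard_ne_zero (by simp [hG u]))).symm
  · rintro q (rfl | rfl | rfl) <;> assumption
  · rw [hG u, Set.ncard_eq_three.mpr ⟨a, b, c, hab, hac, hbc, rfl⟩]

lemma adj_of_neighborSet_eq {u a b c : V} (h : G.neighborSet u = {a, b, c}) {q : V}
    (hq : q ∈ ({a, b, c} : Set V)) : G.Adj u q := by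
  rwa [← mem_neighborSet, h]

def edgesAvoiding (G : SimpleGraph V) (u v : V) : Set (Sym2 V) :=
  {e ∈ G.edgeSet | u ∉ e ∧ v ∉ e}

variable {u v : V}

lemma edgesAvoiding_subset_edgeDeleted : edgesAvoiding G u v ⊆ (edgeDeleted G u v).edgeSet :=
  fun e he => by
    rw [edgeDeleted, edgeSet_fromEdgeSet]
    exact ⟨Or.inl (Or.inl he), G.not_isDiag_of_mem_edgeSet he.1⟩

lemma edgeDeleted_adj_left {a b : V} (ha : G.Adj u a) (hb : G.Adj u b) (hab : a ≠ b)
    (hav : a ≠ v) (hbv : b ≠ v) : (edgeDeleted G u v).Adj a b :=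
  (fromEdgeSet_adj _).mpr ⟨Or.inl (Or.inr ⟨a, b, rfl, hab, ha, hb, hav, hbv⟩), hab⟩

lemma edgeDeleted_adj_right {a b : V} (ha : G.Adj v a) (hb : G.Adj v b) (hab : a ≠ b)
    (hau : a ≠ u) (hbu : b ≠ u) : (edgeDeleted G u v).Adj a b :=
  (fromEdgeSet_adj _).mpr ⟨Or.inr ⟨a, b, rfl, hab, ha, hb, hau, hbu⟩, hab⟩

lemma ne_of_edgeDeleted_adj {a b : V} (h : (edgeDeleted G u v).Adj a b) : a ≠ u ∧ a ≠ v := by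
  rw [edgeDeleted, fromEdgeSet_adj] at h
  rcases h.1 with (⟨-, hu, hv⟩ | ⟨x, y, hxy, -, hux, huy, hxv, hyv⟩) |
      ⟨x, y, hxy, -, hvx, hvy, hxu, hyu⟩
  · exact ⟨by rintro rfl; simp at hu, by rintro rfl; simp at hv⟩
  · rcases Sym2.eq_iff.mp hxy with ⟨rfl, -⟩ | ⟨rfl, -⟩
    exacts [⟨hux.ne', hxv⟩, ⟨huy.ne', hyv⟩]
  · rcases Sym2.eq_iff.mp hxy with ⟨rfl, -⟩ | ⟨rfl, -⟩
    exacts [⟨hxu, hvx.ne'⟩, ⟨hyu, hvy.ne'⟩]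

end Graphs

section Extension

open Classical in
noncomputable def extendColoring (u v ta wb : V) (z c₁ c₂ : Color) (γ : Sym2 V → Color)
    (e : Sym2 V) : Color :=
  if e = s(u, v) then z
  else if u ∈ e then c₁ + if ta ∈ e then z else 0
  else if v ∈ e then c₂ + if wb ∈ e then z else 0
  else γ e

variable {G : SimpleGraph V} {u v ta tb wa wb : V} {z c₁ c₂ : Color} {γ : Sym2 V → Color}

lemma extendColoring_of_notMem {e : Sym2 V} (hu : u ∉ e) (hv : v ∉ e) :
    extendColoring u v ta wb z c₁ c₂ γ e = γ e := by
  have he : e ≠ s(u, v) := by rintro rfl; exact hu (Sym2.mem_mk_left _ _)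
  simp [extendColoring, he, hu, hv]

lemma extendColoring_self : extendColoring u v ta wb z c₁ c₂ γ s(u, v) = z :=
  if_pos rfl

lemma extendColoring_ta (huv : u ≠ v) (htau : ta ≠ u) (htav : ta ≠ v) :
    extendColoring u v ta wb z c₁ c₂ γ s(u, ta) = c₁ + z := by
  simp [extendColoring, huv, htau, htav]

lemma extendColoring_tb (huv : u ≠ v) (htau : ta ≠ u) (htab : ta ≠ tb) (htbv : tb ≠ v) :
    extendColoring u v ta wb z c₁ c₂ γ s(u, tb) = c₁ := by
  simp [extendColoring, huv, htau, htab, htbv]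

lemma extendColoring_wa (huv : u ≠ v) (hwau : wa ≠ u) (hwbv : wb ≠ v) (hwab : wa ≠ wb) :
    extendColoring u v ta wb z c₁ c₂ γ s(v, wa) = c₂ := by
  simp [extendColoring, huv, huv.symm, hwau, hwau.symm, hwbv, hwab.symm]

lemma extendColoring_wb (huv : u ≠ v) (hwbu : wb ≠ u) :
    extendColoring u v ta wb z c₁ c₂ γ s(v, wb) = c₂ + z := by
  simp [extendColoring, huv, huv.symm, hwbu, hwbu.symm]

lemma extendColoring_mem_colorSet (hz : z ∈ colorSet) (hc₁ : c₁ ∈ colorSet)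
    (hc₁z : c₁ + z ∈ colorSet) (hc₂ : c₂ ∈ colorSet) (hc₂z : c₂ + z ∈ colorSet) {e : Sym2 V}
    (hγ : u ∉ e → v ∉ e → γ e ∈ colorSet) : extendColoring u v ta wb z c₁ c₂ γ e ∈ colorSet := by
  unfold extendColoring
  split_ifs
  exacts [hz, hc₁z, by rwa [add_zero], hc₂z, by rwa [add_zero], hγ ‹_› ‹_›]

lemma injOn_extendColoring_left (hNu : G.neighborSet u = {v, ta, tb}) (htab : ta ≠ tb)
    (htav : ta ≠ v) (htbv : tb ≠ v) (hz : z ∈ colorSet) (hc₁ : c₁ ∈ colorSet) (hc₁z : c₁ ≠ z) :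
    Set.InjOn (fun q => extendColoring u v ta wb z c₁ c₂ γ s(u, q)) (G.neighborSet u) := by
  have huv := (adj_of_neighborSet_eq hNu (by simp : v ∈ _)).ne
  have htau := (adj_of_neighborSet_eq hNu (by simp : ta ∈ _)).ne'
  obtain ⟨-, h₁, h₂⟩ := third_color hc₁ hz hc₁z
  rw [hNu]
  refine injOn_triple ?_ ?_ ?_ <;> simp only [extendColoring_self,
    extendColoring_ta huv htau htav, extendColoring_tb huv htau htab htbv]
  exacts [h₂.symm, hc₁z.symm, h₁]

lemma injOn_extendColoring_right (hNv : G.neighborSet v = {u, wa, wb}) (hwab : wa ≠ wb)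
    (hwau : wa ≠ u) (hwbu : wb ≠ u) (hz : z ∈ colorSet) (hc₂ : c₂ ∈ colorSet) (hc₂z : c₂ ≠ z) :
    Set.InjOn (fun q => extendColoring u v ta wb z c₁ c₂ γ s(v, q)) (G.neighborSet v) := by
  have huv := (adj_of_neighborSet_eq hNv (by simp : u ∈ _)).ne'
  have hwbv := (adj_of_neighborSet_eq hNv (by simp : wb ∈ _)).ne'
  obtain ⟨-, h₁, h₂⟩ := third_color hc₂ hz hc₂z
  rw [hNv]
  refine injOn_triple ?_ ?_ ?_ <;> simp only [Sym2.eq_swap (a := v) (b := u), extendColoring_self,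
    extendColoring_wa huv hwau hwbv hwab, extendColoring_wb huv hwbu]
  exacts [hc₂z.symm, h₂.symm, h₁.symm]

lemma extendColoring_left_ne (hNu : G.neighborSet u = {v, ta, tb}) (htab : ta ≠ tb)
    (htav : ta ≠ v) (htbv : tb ≠ v) (hta : IsMissingAt γ (edgesAvoiding G u v) ta (c₁ + z))
    (htb : IsMissingAt γ (edgesAvoiding G u v) tb c₁) {p : V} (hp : G.Adj u p) (hpv : p ≠ v)
    {f : Sym2 V} (hf : f ∈ edgesAvoiding G u v) (hpf : p ∈ f) :
    extendColoring u v ta wb z c₁ c₂ γ s(u, p) ≠ γ f := by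
  have huv := (adj_of_neighborSet_eq hNu (by simp : v ∈ _)).ne
  have htau := (adj_of_neighborSet_eq hNu (by simp : ta ∈ _)).ne'
  rcases (hNu ▸ hp : p ∈ ({v, ta, tb} : Set V)) with rfl | rfl | rfl
  · exact absurd rfl hpv
  · rw [extendColoring_ta huv htau htav]
    exact (hta f hf hpf).symm
  · rw [extendColoring_tb huv htau htab htbv]
    exact (htb f hf hpf).symm

lemma extendColoring_right_ne (hNv : G.neighborSet v = {u, wa, wb}) (hwab : wa ≠ wb)
    (hwau : wa ≠ u) (hwbu : wb ≠ u) (hwa : IsMissingAt γ (edgesAvoiding G u v) wa c₂)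
    (hwb : IsMissingAt γ (edgesAvoiding G u v) wb (c₂ + z)) {p : V} (hp : G.Adj v p)
    (hpu : p ≠ u) {f : Sym2 V} (hf : f ∈ edgesAvoiding G u v) (hpf : p ∈ f) :
    extendColoring u v ta wb z c₁ c₂ γ s(v, p) ≠ γ f := by
  have huv := (adj_of_neighborSet_eq hNv (by simp : u ∈ _)).ne'
  have hwbv := (adj_of_neighborSet_eq hNv (by simp : wb ∈ _)).ne'
  rcases (hNv ▸ hp : p ∈ ({u, wa, wb} : Set V)) with rfl | rfl | rfl
  · exact absurd rfl hpu
  · rw [extendColoring_wa huv hwau hwbv hwab]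
    exact (hwa f hf hpf).symm
  · rw [extendColoring_wb huv hwbu]
    exact (hwb f hf hpf).symm

lemma injOn_extendColoring_of_ne (hG3 : G.CliqueFree 3) (hNu : G.neighborSet u = {v, ta, tb})
    (hNv : G.neighborSet v = {u, wa, wb}) (htab : ta ≠ tb) (htav : ta ≠ v) (htbv : tb ≠ v)
    (hwab : wa ≠ wb) (hwau : wa ≠ u) (hwbu : wb ≠ u) (hγ : IsProperOn γ (edgesAvoiding G u v))
    (hta : IsMissingAt γ (edgesAvoiding G u v) ta (c₁ + z))
    (htb : IsMissingAt γ (edgesAvoiding G u v) tb c₁)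
    (hwa : IsMissingAt γ (edgesAvoiding G u v) wa c₂)
    (hwb : IsMissingAt γ (edgesAvoiding G u v) wb (c₂ + z)) {p : V} (hpu : p ≠ u) (hpv : p ≠ v) :
    Set.InjOn (fun q => extendColoring u v ta wb z c₁ c₂ γ s(p, q)) (G.neighborSet p) := by
  have hold : ∀ q, G.Adj p q → q ≠ u → q ≠ v → s(p, q) ∈ edgesAvoiding G u v :=
    fun q hq hqu hqv => ⟨hq, by simp [hpu.symm, hqu.symm], by simp [hpv.symm, hqv.symm]⟩
  have key : ∀ q r, G.Adj p q → G.Adj p r → q ≠ r → r ≠ u → r ≠ v →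
      extendColoring u v ta wb z c₁ c₂ γ s(p, q) ≠ extendColoring u v ta wb z c₁ c₂ γ s(p, r) := by
    intro q r hq hr hqr hru hrv
    have hr₀ := hold r hr hru hrv
    rw [extendColoring_of_notMem hr₀.2.1 hr₀.2.2]
    rcases eq_or_ne q u with rfl | hqu
    · rw [Sym2.eq_swap]
      exact extendColoring_left_ne hNu htab htav htbv hta htb hq.symm hpv hr₀ (Sym2.mem_mk_left _ _)
    rcases eq_or_ne q v with rfl | hqv
    · rw [Sym2.eq_swap]
      exact extendColoring_right_ne hNv hwab hwau hwbu hwa hwb hq.symm hpu hr₀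
        (Sym2.mem_mk_left _ _)
    have hq₀ := hold q hq hqu hqv
    rw [extendColoring_of_notMem hq₀.2.1 hq₀.2.2]
    exact hγ _ hq₀ _ hr₀
      ⟨fun h => hqr (Sym2.congr_right.mp h), p, Sym2.mem_mk_left _ _, Sym2.mem_mk_left _ _⟩
  intro q hq r hr hfqr
  by_contra hqr
  by_cases hr' : r ≠ u ∧ r ≠ v
  · exact key q r hq hr hqr hr'.1 hr'.2 hfqr
  by_cases hq' : q ≠ u ∧ q ≠ v
  · exact key r q hr hq (Ne.symm hqr) hq'.1 hq'.2 hfqr.symm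
  have huv := adj_of_neighborSet_eq hNu (by simp : v ∈ _)
  have hq : G.Adj p q := hq
  have hr : G.Adj p r := hr
  rcases (not_and_or.mp hq').imp not_not.mp not_not.mp with rfl | rfl <;>
    rcases (not_and_or.mp hr').imp not_not.mp not_not.mp with rfl | rfl
  exacts [hqr rfl, not_adj_of_cliqueFree_three hG3 hq.symm hr huv,
    not_adj_of_cliqueFree_three hG3 hr.symm hq huv, hqr rfl]

lemma EC_nonempty_of_extend (hG3 : G.CliqueFree 3) (hNu : G.neighborSet u = {v, ta, tb})
    (hNv : G.neighborSet v = {u, wa, wb}) (htab : ta ≠ tb) (htav : ta ≠ v) (htbv : tb ≠ v)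
    (hwab : wa ≠ wb) (hwau : wa ≠ u) (hwbu : wb ≠ u) (hz : z ∈ colorSet)
    (hc₁ : c₁ ∈ colorSet) (hc₁z : c₁ ≠ z) (hc₂ : c₂ ∈ colorSet) (hc₂z : c₂ ≠ z)
    (hγ : IsProperOn γ (edgesAvoiding G u v))
    (hγmem : ∀ e ∈ edgesAvoiding G u v, γ e ∈ colorSet)
    (hta : IsMissingAt γ (edgesAvoiding G u v) ta (c₁ + z))
    (htb : IsMissingAt γ (edgesAvoiding G u v) tb c₁)
    (hwa : IsMissingAt γ (edgesAvoiding G u v) wa c₂)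
    (hwb : IsMissingAt γ (edgesAvoiding G u v) wb (c₂ + z)) : (EC G).Nonempty := by
  refine EC_nonempty_of_injOn (extendColoring u v ta wb z c₁ c₂ γ) (fun e he => ?_) fun p => ?_
  · exact extendColoring_mem_colorSet hz hc₁ (third_color hc₁ hz hc₁z).1 hc₂
      (third_color hc₂ hz hc₂z).1 fun hu hv => hγmem e ⟨he, hu, hv⟩
  by_cases hpu : p = u
  · subst p
    exact injOn_extendColoring_left hNu htab htav htbv hz hc₁ hc₁z
  by_cases hpv : p = v
  · subst p
    exact injOn_extendColoring_right hNv hwab hwau hwbu hz hc₂ hc₂z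
  exact injOn_extendColoring_of_ne hG3 hNu hNv htab htav htbv hwab hwau hwbu hγ hta htb hwa hwb
    hpu hpv

end Extension

section Snark

variable {G : SimpleGraph V} {u v : V}

lemma EC_nonempty_of_kempe_arcs (hG3 : G.CliqueFree 3) {ta tb wa wb : V}
    (hNu : G.neighborSet u = {v, ta, tb}) (hNv : G.neighborSet v = {u, wa, wb})
    {γ : Sym2 V → Color} (hγ : γ ∈ EC (edgeDeleted G u v)) {x y : Color}
    (hx : x ∈ colorSet) (hy : y ∈ colorSet) (hxy : x ≠ y)
    {h₁ : (edgeDeleted G u v).Adj ta tb} {A₁ : (edgeDeleted G u v).Walk tb wa}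
    {h₂ : (edgeDeleted G u v).Adj wa wb} {A₂ : (edgeDeleted G u v).Walk wb ta}
    (hC : (arcCycle h₁ A₁ h₂ A₂).IsCycle)
    (hcol : ∀ e ∈ (arcCycle h₁ A₁ h₂ A₂).edges, γ e = x ∨ γ e = y) : (EC G).Nonempty := by
  obtain ⟨hγmem, -, hγ⟩ := hγ
  replace hγ : IsProperOn γ (edgeDeleted G u v).edgeSet := hγ
  have hE : edgesAvoiding G u v ⊆ (edgeDeleted G u v).edgeSet := edgesAvoiding_subset_edgeDeleted
  have hd₁ : s(ta, tb) ∉ edgesAvoiding G u v := fun h => not_adj_of_cliqueFree_three hG3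
    (adj_of_neighborSet_eq hNu (by simp : ta ∈ _)).symm (adj_of_neighborSet_eq hNu (by simp)) h.1
  have hd₂ : s(wa, wb) ∉ edgesAvoiding G u v := fun h => not_adj_of_cliqueFree_three hG3
    (adj_of_neighborSet_eq hNv (by simp : wa ∈ _)).symm (adj_of_neighborSet_eq hNv (by simp)) h.1
  have hd₁C : s(ta, tb) ∈ (arcCycle h₁ A₁ h₂ A₂).edges := mem_edges_arcCycle.mpr (Or.inl rfl)
  have hd₂C : s(wa, wb) ∈ (arcCycle h₁ A₁ h₂ A₂).edges :=
    mem_edges_arcCycle.mpr (Or.inr (Or.inr (Or.inl rfl)))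
  have hdisj := disjoint_support_arcs hC
  obtain ⟨hz, hzx, hzy⟩ := third_color hx hy hxy
  have hne_z : ∀ e ∈ (arcCycle h₁ A₁ h₂ A₂).edges, γ e ≠ x + y := fun e he => by
    rcases hcol e he with h | h <;> rw [h]
    exacts [hzx.symm, hzy.symm]
  exact EC_nonempty_of_extend hG3 hNu hNv h₁.ne (ne_of_edgeDeleted_adj h₁).2
    (ne_of_edgeDeleted_adj h₁.symm).2 h₂.ne (ne_of_edgeDeleted_adj h₂).1
    (ne_of_edgeDeleted_adj h₂.symm).1 hz (hγmem _ h₁) (hne_z _ hd₁C) (hγmem _ h₂) (hne_z _ hd₂C)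
    (isProperOn_kempeSwap_arc hγ hC hcol hE hd₁ hd₂)
    (fun e he => kempeSwap_mem_colorSet (fun e he => hγmem e (hE he)) hx hy
      (fun e he => hcol e (mem_edges_arcCycle.mpr (Or.inr (Or.inr (Or.inr he))))) he)
    (isMissingAt_kempeSwap_of_mem_support hγ hC hcol hE hd₁ hd₂ hd₁C hd₁
      (Sym2.mem_mk_left _ _) A₂.end_mem_support)
    (isMissingAt_kempeSwap_of_notMem_support hγ hE h₁ hd₁ (Sym2.mem_mk_right _ _)
      (hdisj A₁.start_mem_support))
    (isMissingAt_kempeSwap_of_notMem_support hγ hE h₂ hd₂ (Sym2.mem_mk_left _ _)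
      (hdisj A₁.end_mem_support))
    (isMissingAt_kempeSwap_of_mem_support hγ hC hcol hE hd₁ hd₂ hd₂C hd₂
      (Sym2.mem_mk_right _ _) A₂.start_mem_support)

lemma EC_nonempty_of_inCommonKempeCycle (hG3 : G.CliqueFree 3) {t₁ t₂ w₁ w₂ : V}
    (hNu : G.neighborSet u = {v, t₁, t₂}) (hNv : G.neighborSet v = {u, w₁, w₂})
    {γ : Sym2 V → Color} (hγ : γ ∈ EC (edgeDeleted G u v))
    (hK : InCommonKempeCycle (edgeDeleted G u v) γ s(t₁, t₂) s(w₁, w₂)) : (EC G).Nonempty := by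
  obtain ⟨x, hx, y, hy, hxy, r, C, hC, hcol, hd₁, hd₂⟩ := hK
  obtain ⟨h₁, P, hP, hPC⟩ := exists_isCycle_cons_of_mem_edges hC hd₁
  have hd₂d₁ : s(w₁, w₂) ≠ s(t₁, t₂) := by
    have huv := adj_of_neighborSet_eq hNu (by simp : v ∈ _)
    have hne : ∀ t ∈ ({t₁, t₂} : Set V), ∀ w ∈ ({w₁, w₂} : Set V), w ≠ t :=
      fun t ht w hw hwt => not_adj_of_cliqueFree_three hG3 huv
        (adj_of_neighborSet_eq hNv (Set.mem_insert_of_mem _ hw))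
        (hwt ▸ adj_of_neighborSet_eq hNu (Set.mem_insert_of_mem _ ht))
    rw [Ne, Sym2.eq_iff]
    rintro (⟨h, -⟩ | ⟨h, -⟩)
    exacts [hne t₁ (by simp) w₁ (by simp) h, hne t₂ (by simp) w₁ (by simp) h]
  obtain ⟨wa, wb, h₂, A₁, A₂, rfl, hw⟩ := exists_append_cons_of_mem_edges P
    ((List.mem_cons.mp ((hPC _).mpr hd₂)).resolve_left hd₂d₁)
  have hNv' : G.neighborSet v = {u, wa, wb} := by
    rcases Sym2.eq_iff.mp hw with ⟨rfl, rfl⟩ | ⟨rfl, rfl⟩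
    exacts [hNv, by rw [hNv, Set.pair_comm]]
  exact EC_nonempty_of_kempe_arcs hG3 hNu hNv' hγ hx hy hxy (h₁ := h₁) (A₁ := A₁) hP
    fun e he => hcol e ((hPC e).mp he)

end Snark

theorem statement_2_general {V : Type*} (G : SimpleGraph V) (hG : IsSnark G)
    (u v t₁ t₂ w₁ w₂ : V) (huv : G.Adj u v)
    (ht₁ : G.Adj u t₁) (ht₂ : G.Adj u t₂) (ht : t₁ ≠ t₂) (ht₁v : t₁ ≠ v) (ht₂v : t₂ ≠ v)
    (hw₁ : G.Adj v w₁) (hw₂ : G.Adj v w₂) (hw : w₁ ≠ w₂) (hw₁u : w₁ ≠ u) (hw₂u : w₂ ≠ u) :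
    OrthogonalEdges (edgeDeleted G u v) (s(t₁, t₂)) (s(w₁, w₂)) := by
  obtain ⟨-, hcub, hgirth, -, hEC⟩ := hG
  refine ⟨edgeDeleted_adj_left ht₁ ht₂ ht ht₁v ht₂v, edgeDeleted_adj_right hw₁ hw₂ hw hw₁u hw₂u,
    fun γ hγ hK => ?_⟩
  have hG3 := cliqueFree_three_of_four_le_girth (by omega : 4 ≤ G.girth)
  have hcol := EC_nonempty_of_inCommonKempeCycle hG3
    (neighborSet_eq_of_isCubic hcub huv ht₁ ht₂ ht₁v.symm ht₂v.symm ht)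
    (neighborSet_eq_of_isCubic hcub huv.symm hw₁ hw₂ hw₁u.symm hw₂u.symm hw) hγ hK
  rw [hEC] at hcol
  exact Set.not_nonempty_empty hcol

/-- **Kászonyi, Theorem 3.3(B).** If `G` is a snark, `e = s(u,v)` is an edge of `G`, and the
graph `G_e` is edge-3-colorable, then the two new edges `d₁ = s(t₁,t₂)` and `d₂ = s(w₁,w₂)`
are orthogonal in `G_e`. -/
theorem statement_2 {V : Type*} [Fintype V] (G : SimpleGraph V) (hG : IsSnark G)
    (u v t₁ t₂ w₁ w₂ : V) (huv : G.Adj u v)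
    (ht₁ : G.Adj u t₁) (ht₂ : G.Adj u t₂) (ht : t₁ ≠ t₂) (ht₁v : t₁ ≠ v) (ht₂v : t₂ ≠ v)
    (hw₁ : G.Adj v w₁) (hw₂ : G.Adj v w₂) (hw : w₁ ≠ w₂) (hw₁u : w₁ ≠ u) (hw₂u : w₂ ≠ u)
    (hcol : (EC (edgeDeleted G u v)).Nonempty) :
    OrthogonalEdges (edgeDeleted G u v) (s(t₁, t₂)) (s(w₁, w₂)) :=
  statement_2_general G hG u v t₁ t₂ w₁ w₂ huv ht₁ ht₂ ht ht₁v ht₂v hw₁ hw₂ hw hw₁u hw₂u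

end SnarkPaper
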